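/- arXiv:1602.06741 — 9 statements merged into one kernel-verified Lean document; each statement's English description precedes it below -/
import Mathlib

section
/- In any normed plane, c_R(‖·‖) + c_D(‖·‖) ≥ 1, where c_D(‖·‖) = inf{s(y,x) : x,y ∈ S, x ⊣_B y} and c_R(‖·‖) = sup_{x,y∈S} |s(x,y) − s(y,x)|. -/
/-!
A Birkhoff orthogonal pair of unit vectors `x ⊣_B y` exists in every normed plane (take a
norming functional of `x` and a unit vector of its kernel). For such a pair `s(x, y) = 1`, so
`1 - s(y, x) = |s(x, y) - s(y, x)| ≤ c_R`; taking the infimum over all such pairs gives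
`1 - c_R ≤ c_D`.
-/

open Module

variable {V : Type*} [NormedAddCommGroup V] [NormedSpace ℝ V]

noncomputable def sine {V : Type*} [NormedAddCommGroup V] [NormedSpace ℝ V] (x y : V) : ℝ :=
  ⨅ t : ℝ, ‖x + t • y‖

def BOrth {V : Type*} [NormedAddCommGroup V] [NormedSpace ℝ V] (x y : V) : Prop :=
  ∀ t : ℝ, ‖x‖ ≤ ‖x + t • y‖

noncomputable def cD (V : Type*) [NormedAddCommGroup V] [NormedSpace ℝ V] : ℝ :=
  sInf {r : ℝ | ∃ x y : V, ‖x‖ = 1 ∧ ‖y‖ = 1 ∧ BOrth x y ∧ r = sine y x}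

noncomputable def cR (V : Type*) [NormedAddCommGroup V] [NormedSpace ℝ V] : ℝ :=
  sSup {r : ℝ | ∃ x y : V, ‖x‖ = 1 ∧ ‖y‖ = 1 ∧ r = |sine x y - sine y x|}

lemma sine_nonneg (x y : V) : 0 ≤ sine x y :=
  Real.iInf_nonneg fun _ => norm_nonneg _

lemma sine_le_norm (x y : V) : sine x y ≤ ‖x‖ := by
  have h := ciInf_le (f := fun t : ℝ => ‖x + t • y‖) ⟨0, by rintro _ ⟨t, rfl⟩; positivity⟩ 0
  simpa [sine] using h

lemma sine_eq_norm_of_bOrth {x y : V} (h : BOrth x y) : sine x y = ‖x‖ :=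
  le_antisymm (sine_le_norm x y) (le_ciInf h)

lemma abs_sine_sub_sine_le_one {x y : V} (hx : ‖x‖ = 1) (hy : ‖y‖ = 1) :
    |sine x y - sine y x| ≤ 1 := by
  rw [abs_sub_le_iff]
  constructor <;> linarith [sine_nonneg x y, sine_nonneg y x, sine_le_norm x y, sine_le_norm y x]

lemma bOrth_of_norm_le_one {x y : V} {g : StrongDual ℝ V} (hg : ‖g‖ ≤ 1) (hgx : g x = ‖x‖)
    (hgy : g y = 0) : BOrth x y := fun t =>
  calc ‖x‖ = ‖g (x + t • y)‖ := by simp [hgx, hgy]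
    _ ≤ ‖g‖ * ‖x + t • y‖ := g.le_opNorm _
    _ ≤ ‖x + t • y‖ := mul_le_of_le_one_left (norm_nonneg _) hg

lemma exists_norm_eq_one_bOrth_of_one_lt_finrank (hV : 1 < finrank ℝ V) (x : V) :
    ∃ y : V, ‖y‖ = 1 ∧ BOrth x y := by
  have : FiniteDimensional ℝ V := .of_finrank_pos (by omega)
  obtain ⟨g, hg, hgx⟩ := exists_dual_vector'' ℝ x
  have hker : LinearMap.ker (g : V →ₗ[ℝ] ℝ) ≠ ⊥ :=
    LinearMap.ker_ne_bot_of_finrank_lt (by simpa using hV)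
  obtain ⟨z, hz, hz0⟩ := Submodule.exists_mem_ne_zero_of_ne_bot hker
  refine ⟨‖z‖⁻¹ • z, norm_smul_inv_norm hz0, bOrth_of_norm_le_one hg hgx ?_⟩
  simp [show g z = 0 from hz]

lemma bddAbove_cR_set : BddAbove {r : ℝ | ∃ x y : V, ‖x‖ = 1 ∧ ‖y‖ = 1 ∧
    r = |sine x y - sine y x|} := by
  refine ⟨1, ?_⟩
  rintro r ⟨x, y, hx, hy, rfl⟩
  exact abs_sine_sub_sine_le_one hx hy

lemma one_sub_sine_le_cR {x y : V} (hx : ‖x‖ = 1) (hy : ‖y‖ = 1) (hxy : BOrth x y) :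
    1 - sine y x ≤ cR V := by
  refine le_csSup bddAbove_cR_set ⟨x, y, hx, hy, ?_⟩
  rw [sine_eq_norm_of_bOrth hxy, hx, abs_of_nonneg]
  linarith [hy ▸ sine_le_norm y x]

theorem cR_add_cD_ge_one (hV : finrank ℝ V = 2) : 1 ≤ cR V + cD V := by
  have : Nontrivial V := Module.nontrivial_of_finrank_pos (R := ℝ) (by omega)
  obtain ⟨x, hx⟩ := exists_norm_eq V zero_le_one
  obtain ⟨y, hy, hxy⟩ := exists_norm_eq_one_bOrth_of_one_lt_finrank (by omega) x
  have h : 1 - cR V ≤ cD V := by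
    refine le_csInf ⟨_, x, y, hx, hy, hxy, rfl⟩ ?_
    rintro r ⟨a, b, ha, hb, hab, rfl⟩
    linarith [one_sub_sine_le_cR ha hb hab]
  linarith
end

section
/- In a Radon plane, if [pq] is a segment contained in the unit circle S, then ‖p − q‖ ≤ 1. -/
open Module

variable {V : Type*} [NormedAddCommGroup V] [NormedSpace ℝ V]

theorem radon_segment_in_sphere_norm_le_one (hV : finrank ℝ V = 2)
    (hRadon : ∀ x y : V, BOrth x y → BOrth y x) (p q : V)
    (hseg : segment ℝ p q ⊆ {w : V | ‖w‖ = 1}) : ‖p - q‖ ≤ 1 := by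
  have hp : ‖p‖ = 1 := hseg (left_mem_segment ℝ p q)
  have hq : ‖q‖ = 1 := hseg (right_mem_segment ℝ p q)
  have key : ∀ t : ℝ, p + t • (p - q) = (1 + t) • p - t • q := by
    intro t; module
  have hB : BOrth p (p - q) := by
    intro t
    rw [hp, key]
    rcases le_or_gt 0 t with ht | ht
    · have h1 : ‖(1 + t) • p‖ - ‖t • q‖ ≤ ‖(1 + t) • p - t • q‖ :=
        norm_sub_norm_le _ _
      rw [norm_smul, norm_smul, hp, hq, Real.norm_eq_abs, Real.norm_eq_abs] at h1
      rw [abs_of_nonneg (by linarith), abs_of_nonneg ht] at h1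
      linarith
    · rcases le_or_gt (-1) t with ht1 | ht1
      · have hmem : (1 + t) • p - t • q ∈ segment ℝ p q := by
          refine ⟨1 + t, -t, by linarith, by linarith, by ring, by module⟩
        have := hseg hmem
        simp only [Set.mem_setOf_eq] at this
        rw [this]
      · have h1 : ‖(-t) • q‖ - ‖(-(1 + t)) • p‖ ≤ ‖(-t) • q - (-(1 + t)) • p‖ :=
          norm_sub_norm_le _ _
        have heq : (-t) • q - (-(1 + t)) • p = (1 + t) • p - t • q := by module
        rw [heq, norm_smul, norm_smul, hp, hq, Real.norm_eq_abs, Real.norm_eq_abs] at h1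
        rw [abs_of_nonneg (by linarith), abs_of_nonneg (by linarith)] at h1
        linarith
  have hB' := hRadon _ _ hB (-1)
  have heq : (p - q) + (-1 : ℝ) • p = -q := by module
  rw [heq, norm_neg, hq] at hB'
  exact hB'
end

section
/- In a Radon plane, if a segment [pq] contained in the unit circle S satisfies ‖p − q‖ = 1, then S is an affine regular hexagon, namely the hexagon with vertices ±p, ±q, ±(p−q). -/
open Module

variable {V : Type*} [NormedAddCommGroup V] [NormedSpace ℝ V]

/-! The line through `p` and `q` supports the unit ball, since `t ↦ ‖q + t • (p - q)‖` is convex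
and equals `1` on `[0, 1]`; so `p` and `q` are Birkhoff orthogonal to `p - q`, and by the Radon
property `p - q` is Birkhoff orthogonal to `p` and to `q`. These three relations give
`max |a| (max |b| |a + b|) ≤ ‖a • p + b • q‖`, which makes `p, q` a basis of the plane and puts the
unit ball inside the hexagon `|a|, |b|, |a + b| ≤ 1`, i.e. the convex hull of `±p, ±q, ±(p - q)`.
The reverse inclusion holds because the six vertices have norm `1`. -/

section BirkhoffOrthogonality

variable {x y : V}

theorem BOrth.neg_right (h : BOrth x y) : BOrth x (-y) := fun t => by
  simpa using h (-t)

theorem BOrth.abs_mul_norm_le (h : BOrth x y) (a b : ℝ) : |a| * ‖x‖ ≤ ‖a • x + b • y‖ := by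
  rcases eq_or_ne a 0 with rfl | ha
  · simp
  · have hxy : a • x + b • y = a • (x + (b / a) • y) := by
      rw [smul_add, smul_smul, mul_div_cancel₀ b ha]
    rw [hxy, norm_smul, Real.norm_eq_abs]
    exact mul_le_mul_of_nonneg_left (h _) (abs_nonneg a)

end BirkhoffOrthogonality

section SegmentInSphere

variable {p q : V}

theorem bOrth_sub_of_segment_subset_sphere (hseg : segment ℝ p q ⊆ {w : V | ‖w‖ = 1}) :
    BOrth q (p - q) := by
  have hp : ‖p‖ = 1 := hseg (left_mem_segment ℝ p q)
  have hq : ‖q‖ = 1 := hseg (right_mem_segment ℝ p q)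
  set f : ℝ → ℝ := fun t => ‖q + t • (p - q)‖ with hf_def
  have hf : ConvexOn ℝ Set.univ f := by
    simpa [Function.comp_def, AffineMap.lineMap_apply, add_comm] using
      (convexOn_univ_norm (E := V)).comp_affineMap (AffineMap.lineMap q p)
  have hf0 : f 0 = 1 := by simp [hf_def, hq]
  have hf1 : f 1 = 1 := by simp [hf_def, hp]
  intro t
  rw [hq]
  show 1 ≤ f t
  rcases le_or_gt t 0 with ht | ht
  · rw [← hf0]
    exact hf.le_left_of_right_le'' trivial trivial ht zero_lt_one (by rw [hf0, hf1])
  rcases le_or_gt t 1 with ht' | ht'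
  · exact (hseg ⟨t, 1 - t, ht.le, by linarith, by ring, by module⟩).ge
  · rw [← hf1]
    exact hf.le_right_of_left_le'' trivial trivial zero_lt_one ht'.le (by rw [hf0, hf1])

theorem bOrth_sub_left_of_segment_subset_sphere (hseg : segment ℝ p q ⊆ {w : V | ‖w‖ = 1}) :
    BOrth p (p - q) := by
  have h := (bOrth_sub_of_segment_subset_sphere (segment_symm ℝ p q ▸ hseg)).neg_right
  rwa [neg_sub] at h

end SegmentInSphere

section Hexagon

variable {E : Type*} [AddCommGroup E] [Module ℝ E]

theorem Convex.smul_add_smul_mem_of_zero_mem {s : Set E} (hs : Convex ℝ s) (h0 : (0 : E) ∈ s)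
    {u v : E} (hu : u ∈ s) (hv : v ∈ s) {a b : ℝ} (ha : 0 ≤ a) (hb : 0 ≤ b) (hab : a + b ≤ 1) :
    a • u + b • v ∈ s := by
  rcases (add_nonneg ha hb).eq_or_lt with h | h
  · obtain ⟨rfl, rfl⟩ : a = 0 ∧ b = 0 := ⟨by linarith, by linarith⟩
    simpa using h0
  · have hw := hs hu hv (div_nonneg ha h.le) (div_nonneg hb h.le) (by field_simp)
    convert hs.smul_mem_of_zero_mem h0 hw ⟨h.le, hab⟩ using 1
    match_scalars <;> field_simp

theorem smul_add_smul_mem_convexHull_hexagon (p q : E) {a b : ℝ} (ha : |a| ≤ 1) (hb : |b| ≤ 1)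
    (hab : |a + b| ≤ 1) :
    a • p + b • q ∈ convexHull ℝ ({p, -p, q, -q, p - q, q - p} : Set E) := by
  set S : Set E := {p, -p, q, -q, p - q, q - p}
  have h0 : (0 : E) ∈ convexHull ℝ S := by
    simpa using (convex_convexHull ℝ S).midpoint_mem (subset_convexHull ℝ S (by simp [S] : p ∈ S))
      (subset_convexHull ℝ S (by simp [S] : -p ∈ S))
  have sector : ∀ u ∈ S, ∀ v ∈ S, ∀ c d : ℝ, 0 ≤ c → 0 ≤ d → c + d ≤ 1 →
      c • u + d • v ∈ convexHull ℝ S := fun u hu v hv c d hc hd hcd =>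
    (convex_convexHull ℝ S).smul_add_smul_mem_of_zero_mem h0 (subset_convexHull ℝ S hu)
      (subset_convexHull ℝ S hv) hc hd hcd
  rw [abs_le] at ha hb hab
  rcases le_total 0 a with ha0 | ha0 <;> rcases le_total 0 b with hb0 | hb0
  · exact sector p (by simp [S]) q (by simp [S]) a b ha0 hb0 hab.2
  · rcases le_total 0 (a + b) with hab0 | hab0
    · rw [show a • p + b • q = (a + b) • p + (-b) • (p - q) by module]
      exact sector _ (by simp [S]) _ (by simp [S]) _ _ hab0 (by linarith) (by linarith)
    · rw [show a • p + b • q = a • (p - q) + (-(a + b)) • (-q) by module]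
      exact sector _ (by simp [S]) _ (by simp [S]) _ _ ha0 (by linarith) (by linarith)
  · rcases le_total 0 (a + b) with hab0 | hab0
    · rw [show a • p + b • q = (-a) • (q - p) + (a + b) • q by module]
      exact sector _ (by simp [S]) _ (by simp [S]) _ _ (by linarith) hab0 (by linarith)
    · rw [show a • p + b • q = (-(a + b)) • (-p) + b • (q - p) by module]
      exact sector _ (by simp [S]) _ (by simp [S]) _ _ (by linarith) hb0 (by linarith)
  · rw [show a • p + b • q = (-a) • (-p) + (-b) • (-q) by module]
    exact sector _ (by simp [S]) _ (by simp [S]) _ _ (by linarith) (by linarith) (by linarith)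

end Hexagon

theorem exists_smul_add_smul_eq {K E : Type*} [DivisionRing K] [AddCommGroup E] [Module K E]
    (hE : finrank K E = 2) {p q : E} (hpq : LinearIndependent K ![p, q]) (x : E) :
    ∃ a b : K, a • p + b • q = x := by
  have hspan := hpq.span_eq_top_of_card_eq_finrank (by simp [hE])
  rw [Matrix.range_cons_cons_empty] at hspan
  exact Submodule.mem_span_pair.1 (hspan ▸ Submodule.mem_top)

section RadonPlane

variable {p q : V} (hRadon : ∀ x y : V, BOrth x y → BOrth y x)
  (hseg : segment ℝ p q ⊆ {w : V | ‖w‖ = 1}) (hpq : ‖p - q‖ = 1)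
include hRadon hseg hpq

theorem abs_coeffs_le_norm_smul_add_smul (a b : ℝ) :
    |a| ≤ ‖a • p + b • q‖ ∧ |b| ≤ ‖a • p + b • q‖ ∧ |a + b| ≤ ‖a • p + b • q‖ := by
  have hq : ‖q‖ = 1 := hseg (right_mem_segment ℝ p q)
  have hqr := bOrth_sub_of_segment_subset_sphere hseg
  have hpr := bOrth_sub_left_of_segment_subset_sphere hseg
  refine ⟨?_, ?_, ?_⟩
  · have h := (hRadon _ _ hqr).abs_mul_norm_le a (a + b)
    rwa [hpq, mul_one, show a • (p - q) + (a + b) • q = a • p + b • q by module] at h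
  · have h := (hRadon _ _ hpr).abs_mul_norm_le (-b) (a + b)
    rwa [hpq, mul_one, abs_neg, show (-b) • (p - q) + (a + b) • p = a • p + b • q by module] at h
  · have h := hqr.abs_mul_norm_le (a + b) a
    rwa [hq, mul_one, show (a + b) • q + a • (p - q) = a • p + b • q by module] at h

theorem convexHull_hexagon_eq_closedBall (hV : finrank ℝ V = 2) :
    convexHull ℝ ({p, -p, q, -q, p - q, q - p} : Set V) = Metric.closedBall 0 1 := by
  have hp : ‖p‖ = 1 := hseg (left_mem_segment ℝ p q)
  have hq : ‖q‖ = 1 := hseg (right_mem_segment ℝ p q)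
  have bounds := abs_coeffs_le_norm_smul_add_smul hRadon hseg hpq
  have hli : LinearIndependent ℝ ![p, q] := LinearIndependent.pair_iff.2 fun a b hab => by
    obtain ⟨ha, hb, -⟩ := bounds a b
    rw [hab, norm_zero] at ha hb
    exact ⟨abs_nonpos_iff.1 ha, abs_nonpos_iff.1 hb⟩
  refine (convexHull_min ?_ (convex_closedBall 0 1)).antisymm fun x hx => ?_
  · simp [Set.insert_subset_iff, hp, hq, hpq, norm_sub_rev q p]
  · obtain ⟨a, b, rfl⟩ := exists_smul_add_smul_eq hV hli x
    obtain ⟨ha, hb, hab⟩ := bounds a b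
    rw [mem_closedBall_zero_iff] at hx
    exact smul_add_smul_mem_convexHull_hexagon p q (ha.trans hx) (hb.trans hx) (hab.trans hx)

end RadonPlane

theorem radon_segment_in_sphere_hexagon (hV : finrank ℝ V = 2)
    (hRadon : ∀ x y : V, BOrth x y → BOrth y x) (p q : V)
    (hseg : segment ℝ p q ⊆ {w : V | ‖w‖ = 1}) (hpq : ‖p - q‖ = 1) :
    {w : V | ‖w‖ = 1} =
      frontier (convexHull ℝ ({p, -p, q, -q, p - q, q - p} : Set V)) := by
  have hp : ‖p‖ = 1 := hseg (left_mem_segment ℝ p q)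
  have : Nontrivial V := ⟨⟨p, 0, ne_zero_of_norm_ne_zero (by simp [hp])⟩⟩
  rw [convexHull_hexagon_eq_closedBall hRadon hseg hpq hV, frontier_closedBall 0 one_ne_zero]
  ext w
  simp
end

section
/- Given any segment [pq] in a normed plane and a choice of closed half-plane bounded by the line through p and q, there exists a point r in that half-plane such that the triangle pqr is equilateral, i.e., ‖p−q‖ = ‖q−r‖ = ‖r−p‖. -/
open Module

variable {V : Type*} [NormedAddCommGroup V] [NormedSpace ℝ V]

theorem exists_equilateral_in_halfplane (hV : finrank ℝ V = 2) (p q : V) (hpq : p ≠ q)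
    (f : V →ₗ[ℝ] ℝ) (hf : f ≠ 0) (hline : f (q - p) = 0) :
    ∃ r : V, 0 ≤ f (r - p) ∧ ‖p - q‖ = ‖q - r‖ ∧ ‖q - r‖ = ‖r - p‖ := by
  classical
  set v : V := q - p with hv
  have hv0 : v ≠ 0 := sub_ne_zero.mpr (Ne.symm hpq)
  set d : ℝ := ‖v‖ with hd
  have hd0 : 0 < d := norm_pos_iff.mpr hv0
  obtain ⟨x, hx⟩ : ∃ x : V, f x ≠ 0 := by
    by_contra h; push_neg at h; exact hf (LinearMap.ext fun y => by simp [h y])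
  obtain ⟨w, hw⟩ : ∃ w : V, 0 < f w := by
    rcases hx.lt_or_gt with h | h
    · exact ⟨-x, by simpa using neg_pos.mpr h⟩
    · exact ⟨x, h⟩
  set u : ℝ → V := fun s => (-s) • v + (1 - |s|) • w with hu
  have hfu : ∀ s, f (u s) = (1 - |s|) * f w := by
    intro s
    simp [hu, hline]
  have hune : ∀ s, u s ≠ 0 := by
    intro s h0
    have h1 : (1 - |s|) * f w = 0 := by rw [← hfu s, h0, map_zero]
    have h2 : 1 - |s| = 0 := by
      rcases mul_eq_zero.mp h1 with h | h
      · exact h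
      · exact absurd h hw.ne'
    have hs0 : s ≠ 0 := by intro h; rw [h] at h2; simp at h2
    have huv : u s = (-s) • v := by rw [hu]; simp [h2]
    rw [huv] at h0
    rcases smul_eq_zero.mp h0 with h | h
    · exact hs0 (by simpa [neg_eq_zero] using h)
    · exact hv0 h
  have hucont : Continuous u :=
    (continuous_neg.smul continuous_const).add
      ((continuous_const.sub continuous_abs).smul continuous_const)
  set r : ℝ → V := fun s => p + (d / ‖u s‖) • u s with hr
  have hrcont : Continuous r :=
    continuous_const.add ((continuous_const.div hucont.norm
      (fun s => norm_ne_zero_iff.mpr (hune s))).smul hucont)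
  set ψ : ℝ → ℝ := fun s => ‖q - r s‖ with hψ
  have hψcont : Continuous ψ := (continuous_const.sub hrcont).norm
  have hum1 : u (-1) = v := by simp [hu]
  have hrm1 : r (-1) = q := by
    rw [hr]
    simp only [hum1, ← hd, div_self hd0.ne']
    rw [one_smul, hv]
    abel
  have hu1 : u 1 = -v := by simp [hu]
  have hr1 : r 1 = p - v := by
    rw [hr]
    simp only [hu1, norm_neg, ← hd, div_self hd0.ne', one_smul]
    abel
  have hψm1 : ψ (-1) = 0 := by simp [hψ, hrm1]
  have hψ1 : ψ 1 = 2 * d := by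
    have : q - r 1 = (2 : ℝ) • v := by
      rw [hr1, hv]
      module
    rw [hψ]
    simp only [this, norm_smul]
    norm_num [← hd]
  have hsub := intermediate_value_Icc (by norm_num : (-1:ℝ) ≤ 1) hψcont.continuousOn
  have hdmem : d ∈ Set.Icc (ψ (-1)) (ψ 1) := by
    rw [hψm1, hψ1]; constructor <;> [exact hd0.le; linarith]
  obtain ⟨s, hs, hψs⟩ := hsub hdmem
  have habs : |s| ≤ 1 := abs_le.mpr ⟨hs.1, hs.2⟩
  refine ⟨r s, ?_, ?_, ?_⟩
  · have : r s - p = (d / ‖u s‖) • u s := by rw [hr]; exact add_sub_cancel_left p _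
    rw [this, map_smul, smul_eq_mul, hfu s]
    apply mul_nonneg (div_nonneg hd0.le (norm_nonneg _))
    exact mul_nonneg (by linarith) hw.le
  · rw [show ‖p - q‖ = d by rw [hd, hv, norm_sub_rev], ← hψs]
  · have h1 : ‖q - r s‖ = d := hψs
    have h2 : ‖r s - p‖ = d := by
      have : r s - p = (d / ‖u s‖) • u s := by rw [hr]; exact add_sub_cancel_left p _
      rw [this, norm_smul, Real.norm_eq_abs,
        abs_of_nonneg (div_nonneg hd0.le (norm_nonneg _)),
        div_mul_cancel₀ _ (norm_ne_zero_iff.mpr (hune s))]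
    rw [h1, h2]
end

section
/- In a Radon plane equipped with a nondegenerate symplectic bilinear form [·,·], for each x on the unit circle S there exists a unique y ∈ S such that the triangle with vertices o, x, y is equilateral (‖x‖ = ‖y‖ = ‖x − y‖ = 1) and [x,y] > 0. -/
open Module

variable {V : Type*} [NormedAddCommGroup V] [NormedSpace ℝ V]

private lemma conv_norm (a x : V) {u m w : ℝ} (h1 : u ≤ m) (h2 : m ≤ w) :
    (w - u) * ‖a + m • x‖ ≤ (w - m) * ‖a + u • x‖ + (m - u) * ‖a + w • x‖ := by
  have key : (w - u) • (a + m • x) = (w - m) • (a + u • x) + (m - u) • (a + w • x) := by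
    module
  calc (w - u) * ‖a + m • x‖ = ‖(w - u) • (a + m • x)‖ := by
        rw [norm_smul, Real.norm_of_nonneg (by linarith)]
    _ = ‖(w - m) • (a + u • x) + (m - u) • (a + w • x)‖ := by rw [key]
    _ ≤ ‖(w - m) • (a + u • x)‖ + ‖(m - u) • (a + w • x)‖ := norm_add_le _ _
    _ = (w - m) * ‖a + u • x‖ + (m - u) * ‖a + w • x‖ := by
        rw [norm_smul, norm_smul, Real.norm_of_nonneg (by linarith),
          Real.norm_of_nonneg (by linarith)]

private lemma core_contra (hRadon : ∀ x y : V, BOrth x y → BOrth y x) {x a : V} {c s : ℝ}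
    (hx : ‖x‖ = 1) (hc : 0 < c) (hcs : c < s) (hs : 1 < s)
    (ha : ‖a‖ = 1) (hac : ‖a + c • x‖ = 1) (has : ‖a + s • x‖ = 1) : False := by
  have hB : BOrth a x := by
    intro t
    rw [ha]
    rcases lt_trichotomy t c with h | h | h
    · have H := conv_norm a x (le_of_lt h) (le_of_lt hcs)
      rw [hac, has] at H
      nlinarith
    · rw [h, hac]
    · have H := conv_norm a x (le_of_lt hc) (le_of_lt h)
      have h0 : a + (0:ℝ) • x = a := by simp
      rw [hac, h0, ha] at H
      nlinarith
  have hB' := hRadon a x hB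
  have H := hB' s⁻¹
  have hs0 : (0:ℝ) < s := by linarith
  have hrw : x + s⁻¹ • a = s⁻¹ • (a + s • x) := by
    rw [smul_add, smul_smul, inv_mul_cancel₀ (ne_of_gt hs0), one_smul, add_comm]
  rw [hx, hrw, norm_smul, has, Real.norm_of_nonneg (by positivity)] at H
  have : s⁻¹ < 1 := by
    rw [inv_lt_one_iff₀]; right; exact hs
  linarith [H, this]

private lemma ker_omega (hV : finrank ℝ V = 2)
    (ω : V →ₗ[ℝ] V →ₗ[ℝ] ℝ) (halt : ∀ v : V, ω v v = 0)
    (hnd : ∀ v : V, (∀ w : V, ω v w = 0) → v = 0)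
    {x : V} (hx0 : x ≠ 0) {v : V} (hv : ω x v = 0) : ∃ δ : ℝ, v = δ • x := by
  haveI : FiniteDimensional ℝ V := Module.finite_of_finrank_pos (by rw [hV]; norm_num)
  have hωx : (ω x) ≠ 0 := by
    intro h
    exact hx0 (hnd x (fun w => by rw [h]; rfl))
  have hker : finrank ℝ (LinearMap.ker (ω x)) + 1 = 2 := by
    rw [← hV]
    exact Module.Dual.finrank_ker_add_one_of_ne_zero hωx
  have hle : Submodule.span ℝ {x} ≤ LinearMap.ker (ω x) := by
    rw [Submodule.span_le]
    intro y hy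
    rw [Set.mem_singleton_iff] at hy
    rw [hy]
    exact LinearMap.mem_ker.mpr (halt x)
  have heq : Submodule.span ℝ {x} = LinearMap.ker (ω x) := by
    apply Submodule.eq_of_le_of_finrank_le hle
    have h1 : finrank ℝ (Submodule.span ℝ ({x} : Set V)) = 1 := finrank_span_singleton hx0
    omega
  have : v ∈ Submodule.span ℝ ({x} : Set V) := heq ▸ LinearMap.mem_ker.mpr hv
  obtain ⟨δ, hδ⟩ := Submodule.mem_span_singleton.mp this
  exact ⟨δ, hδ.symm⟩

private lemma uniq_aux (hV : finrank ℝ V = 2)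
    (hRadon : ∀ x y : V, BOrth x y → BOrth y x)
    (ω : V →ₗ[ℝ] V →ₗ[ℝ] ℝ) (halt : ∀ v : V, ω v v = 0)
    (hnd : ∀ v : V, (∀ w : V, ω v w = 0) → v = 0)
    {x y1 y2 : V} (hx : ‖x‖ = 1)
    (hy1 : ‖y1‖ = 1) (hd1 : ‖x - y1‖ = 1) (hp1 : 0 < ω x y1)
    (hy2 : ‖y2‖ = 1) (hd2 : ‖x - y2‖ = 1) (hp2 : 0 < ω x y2)
    (hle : ω x y1 ≤ ω x y2) : y1 = y2 := by
  have hx0 : x ≠ 0 := by intro h; rw [h, norm_zero] at hx; norm_num at hx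
  have hsum : 0 < ω x y1 + ω x y2 := by linarith
  obtain ⟨t, ht0, ht1, htsum⟩ : ∃ t : ℝ, 0 < t ∧ t ≤ 1 ∧
      t * (ω x y1 + ω x y2) = 2 * ω x y1 := by
    refine ⟨2 * ω x y1 / (ω x y1 + ω x y2), by positivity, ?_, by field_simp⟩
    rw [div_le_one hsum]
    linarith
  set q : V := t • y2 + (1 - t) • (x - y1) with hq_def
  have hωq : ω x (q - y1) = 0 := by
    have h1 : ω x q = t * ω x y2 - (1 - t) * ω x y1 := by
      rw [hq_def]
      simp only [map_add, map_smul, map_sub, smul_eq_mul, halt x]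
      ring
    rw [map_sub, h1]
    linarith
  obtain ⟨δ, hδ⟩ := ker_omega hV ω halt hnd hx0 hωq
  have hq_eq : q = y1 + δ • x := by
    rw [sub_eq_iff_eq_add] at hδ; rw [hδ]; abel
  have hnq : ‖q‖ ≤ 1 := by
    calc ‖q‖ ≤ ‖t • y2‖ + ‖(1 - t) • (x - y1)‖ := norm_add_le _ _
      _ = t * ‖y2‖ + (1 - t) * ‖x - y1‖ := by
          rw [norm_smul, norm_smul, Real.norm_of_nonneg (le_of_lt ht0),
            Real.norm_of_nonneg (by linarith)]
      _ = 1 := by rw [hy2, hd1]; ring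
  have hnq2 : ‖q - x‖ ≤ 1 := by
    have hrw : q - x = t • (y2 - x) + (1 - t) • (-y1) := by
      rw [hq_def]; module
    rw [hrw]
    calc ‖t • (y2 - x) + (1 - t) • (-y1)‖
        ≤ ‖t • (y2 - x)‖ + ‖(1 - t) • (-y1)‖ := norm_add_le _ _
      _ = t * ‖y2 - x‖ + (1 - t) * ‖y1‖ := by
          rw [norm_smul, norm_smul, norm_neg, Real.norm_of_nonneg (le_of_lt ht0),
            Real.norm_of_nonneg (by linarith)]
      _ = 1 := by rw [← norm_sub_rev x y2, hd2, hy1]; ring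
  rcases lt_trichotomy δ 0 with hδ0 | hδ0 | hδ0
  · exfalso
    have e1 : (q - x) + (-δ) • x = y1 - x := by rw [hq_eq]; module
    have e2 : (q - x) + (1 - δ) • x = y1 := by rw [hq_eq]; module
    have hy1x : ‖y1 - x‖ = 1 := by rw [norm_sub_rev]; exact hd1
    have ha : ‖q - x‖ = 1 := by
      have H := conv_norm (q - x) x (le_of_lt (by linarith : (0:ℝ) < -δ))
        (by linarith : -δ ≤ 1 - δ)
      rw [e1, e2, hy1x, hy1] at H
      have h0 : (q - x) + (0:ℝ) • x = q - x := by simp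
      rw [h0] at H
      nlinarith
    exact core_contra hRadon hx (by linarith : (0:ℝ) < -δ) (by linarith : -δ < 1 - δ)
      (by linarith : (1:ℝ) < 1 - δ) ha (by rw [e1]; exact hy1x) (by rw [e2]; exact hy1)
  · -- δ = 0
    rcases eq_or_lt_of_le ht1 with ht1' | ht1'
    · -- t = 1
      have hq1 : q = y1 := by rw [hq_eq, hδ0, zero_smul, add_zero]
      have hq2' : q = y2 := by rw [hq_def, ht1']; norm_num
      rw [← hq1, hq2']
    · exfalso
      have hq_y1 : q = y1 := by rw [hq_eq, hδ0, zero_smul, add_zero]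
      have e3 : (2 - t) • y1 = t • y2 + (1 - t) • x := by
        have h4 : t • y2 + (1 - t) • (x - y1) = y1 := by rw [← hq_def, hq_y1]
        have h6 : (2 - t) • y1 - (t • y2 + (1 - t) • x)
            = -(t • y2 + (1 - t) • (x - y1) - y1) := by module
        rw [← sub_eq_zero, h6, sub_eq_zero_of_eq h4, neg_zero]
      have hle1 : ‖(2 - t) • y1‖ ≤ 1 := by
        rw [e3]
        calc ‖t • y2 + (1 - t) • x‖ ≤ ‖t • y2‖ + ‖(1 - t) • x‖ := norm_add_le _ _
          _ = t * ‖y2‖ + (1 - t) * ‖x‖ := by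
              rw [norm_smul, norm_smul, Real.norm_of_nonneg (le_of_lt ht0),
                Real.norm_of_nonneg (by linarith)]
          _ = 1 := by rw [hy2, hx]; ring
      rw [norm_smul, Real.norm_of_nonneg (by linarith), hy1] at hle1
      linarith
  · exfalso
    have e1 : (y1 - x) + (1:ℝ) • x = y1 := by module
    have e2 : (y1 - x) + (1 + δ) • x = q := by rw [hq_eq]; module
    have hy1x : ‖y1 - x‖ = 1 := by rw [norm_sub_rev]; exact hd1
    have hqn : ‖q‖ = 1 := by
      have H := conv_norm (y1 - x) x (le_of_lt (by linarith : (0:ℝ) < 1))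
        (by linarith : (1:ℝ) ≤ 1 + δ)
      rw [e1, e2, hy1] at H
      have h0 : (y1 - x) + (0:ℝ) • x = y1 - x := by simp
      rw [h0, hy1x] at H
      nlinarith
    exact core_contra hRadon hx (by linarith : (0:ℝ) < 1) (by linarith : (1:ℝ) < 1 + δ)
      (by linarith : (1:ℝ) < 1 + δ) hy1x (by rw [e1]; exact hy1) (by rw [e2]; exact hqn)

theorem radon_existsUnique_equilateral (hV : finrank ℝ V = 2)
    (hRadon : ∀ x y : V, BOrth x y → BOrth y x)
    (ω : V →ₗ[ℝ] V →ₗ[ℝ] ℝ) (halt : ∀ v : V, ω v v = 0)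
    (hnd : ∀ v : V, (∀ w : V, ω v w = 0) → v = 0)
    (x : V) (hx : ‖x‖ = 1) :
    ∃! y : V, ‖y‖ = 1 ∧ ‖x - y‖ = 1 ∧ 0 < ω x y := by
  have hx0 : x ≠ 0 := by intro h; rw [h, norm_zero] at hx; norm_num at hx
  obtain ⟨z0, hz0⟩ : ∃ w : V, ω x w ≠ 0 := by
    by_contra h
    push_neg at h
    exact hx0 (hnd x h)
  set z : V := (ω x z0)⁻¹ • z0 with hz_def
  have hz : ω x z = 1 := by
    rw [hz_def, map_smul, smul_eq_mul, inv_mul_cancel₀ hz0]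
  set v : ℝ → V := fun s => (1 - 2*s) • x + (s*(1-s)) • z with hv_def
  have hωv : ∀ s : ℝ, ω x (v s) = s * (1-s) := by
    intro s
    rw [hv_def]
    simp only [map_add, map_smul, smul_eq_mul, halt x, hz]
    ring
  have hv0' : v 0 = x := by rw [hv_def]; norm_num
  have hv1' : v 1 = -x := by rw [hv_def]; norm_num
  have hv0 : ∀ s : ℝ, v s ≠ 0 := by
    intro s h
    have h2 : s * (1 - s) = 0 := by rw [← hωv s, h, map_zero]
    rcases mul_eq_zero.mp h2 with h3 | h3
    · rw [h3, hv0'] at h; exact hx0 h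
    · have : s = 1 := by linarith
      rw [this, hv1'] at h
      exact hx0 (neg_eq_zero.mp h)
  have hvc : Continuous v := by
    rw [hv_def]
    fun_prop
  set F : ℝ → ℝ := fun s => ‖x - ‖v s‖⁻¹ • v s‖ with hF_def
  have hFc : Continuous F := by
    apply Continuous.norm
    apply Continuous.sub continuous_const
    exact Continuous.smul (Continuous.inv₀ hvc.norm (fun s => norm_ne_zero_iff.mpr (hv0 s))) hvc
  have hF0 : F 0 = 0 := by
    rw [hF_def]
    simp only [hv0', hx]
    norm_num
  have hF1 : F 1 = 2 := by
    rw [hF_def]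
    simp only [hv1', norm_neg, hx]
    norm_num
    have h2x : x + x = (2:ℝ) • x := by module
    rw [h2x, norm_smul, hx]
    norm_num
  have hIVT := intermediate_value_Icc (by norm_num : (0:ℝ) ≤ 1) hFc.continuousOn
  have h1mem : (1:ℝ) ∈ Set.Icc (F 0) (F 1) := by rw [hF0, hF1]; norm_num
  obtain ⟨s, hs, hFs⟩ := hIVT h1mem
  set y : V := ‖v s‖⁻¹ • v s with hy_def
  have hnvs : (0:ℝ) < ‖v s‖ := norm_pos_iff.mpr (hv0 s)
  have hy : ‖y‖ = 1 := by
    rw [hy_def, norm_smul, Real.norm_of_nonneg (by positivity)]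
    field_simp
  have hxy : ‖x - y‖ = 1 := hFs
  have hs0 : s ≠ 0 := by
    intro h
    rw [h, hF0] at hFs
    norm_num at hFs
  have hs1 : s ≠ 1 := by
    intro h
    rw [h, hF1] at hFs
    norm_num at hFs
  have hslt : 0 < s ∧ s < 1 := by
    constructor
    · exact lt_of_le_of_ne hs.1 (Ne.symm hs0)
    · exact lt_of_le_of_ne hs.2 hs1
  have hωy : 0 < ω x y := by
    rw [hy_def, map_smul, smul_eq_mul, hωv s]
    have h1 : 0 < s * (1 - s) := by nlinarith [hslt.1, hslt.2]
    positivity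
  refine ⟨y, ⟨hy, hxy, hωy⟩, ?_⟩
  rintro y' ⟨h1, h2, h3⟩
  rcases le_total (ω x y') (ω x y) with h | h
  · exact uniq_aux hV hRadon ω halt hnd hx h1 h2 h3 hy hxy hωy h
  · exact (uniq_aux hV hRadon ω halt hnd hx hy hxy hωy h1 h2 h3 h).symm
end

section
/- In a normed plane, if x, y, z are unit vectors with pairwise distinct directions satisfying x ⊣_B y, y ⊣_B z, z ⊣_B x, and z = θx + σy, then |θ| = |σ| = 1. -/
open Module

variable {V : Type*} [NormedAddCommGroup V] [NormedSpace ℝ V]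

/-!
Birkhoff orthogonality is homogeneous in its first argument, so `x ⊣ y`, `y ⊣ z`, `z ⊣ x`
give `‖θ • x‖ ≤ ‖θ • x + σ • y‖ = ‖z‖`, `‖σ • y‖ ≤ ‖σ • y - z‖ = ‖θ • x‖` and
`‖z‖ ≤ ‖z - θ • x‖ = ‖σ • y‖`. The cycle of inequalities closes, so `‖θ • x‖ = ‖σ • y‖ = ‖z‖`.
-/

theorem BOrth.smul_left {u v : V} (h : BOrth u v) (a : ℝ) : BOrth (a • u) v := by
  intro t
  rcases eq_or_ne a 0 with rfl | ha
  · simp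
  · calc ‖a • u‖ = |a| * ‖u‖ := norm_smul a u
      _ ≤ |a| * ‖u + (t / a) • v‖ := by gcongr; exact h _
      _ = ‖a • u + t • v‖ := by
        rw [← Real.norm_eq_abs, ← norm_smul, smul_add, smul_smul, mul_div_cancel₀ t ha]

theorem norm_smul_eq_of_bOrth_cycle {x y z : V} {θ σ : ℝ}
    (hxy : BOrth x y) (hyz : BOrth y z) (hzx : BOrth z x) (hz : z = θ • x + σ • y) :
    ‖θ • x‖ = ‖z‖ ∧ ‖σ • y‖ = ‖z‖ := by
  have hθx : ‖θ • x‖ ≤ ‖z‖ := hz ▸ hxy.smul_left θ σ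
  have hσy : ‖σ • y‖ ≤ ‖θ • x‖ := by
    have h := hyz.smul_left σ (-1)
    rwa [show σ • y + (-1 : ℝ) • z = -(θ • x) by rw [hz]; module, norm_neg] at h
  have hz' : ‖z‖ ≤ ‖σ • y‖ := by
    have h := hzx (-θ)
    rwa [show z + (-θ) • x = σ • y by rw [hz]; module] at h
  exact ⟨by linarith, by linarith⟩

theorem birkhoff_cycle_coeffs_general (x y z : V)
    (hx : ‖x‖ = 1) (hy : ‖y‖ = 1) (hz : ‖z‖ = 1)
    (hB1 : BOrth x y) (hB2 : BOrth y z) (hB3 : BOrth z x)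
    (θ σ : ℝ) (hzrep : z = θ • x + σ • y) :
    |θ| = 1 ∧ |σ| = 1 := by
  obtain ⟨hθ, hσ⟩ := norm_smul_eq_of_bOrth_cycle hB1 hB2 hB3 hzrep
  rw [norm_smul, hx, hz, Real.norm_eq_abs, mul_one] at hθ
  rw [norm_smul, hy, hz, Real.norm_eq_abs, mul_one] at hσ
  exact ⟨hθ, hσ⟩

theorem birkhoff_cycle_coeffs (hV : finrank ℝ V = 2) (x y z : V)
    (hx : ‖x‖ = 1) (hy : ‖y‖ = 1) (hz : ‖z‖ = 1)
    (hxy : ∀ c : ℝ, y ≠ c • x) (hyz : ∀ c : ℝ, z ≠ c • y) (hxz : ∀ c : ℝ, z ≠ c • x)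
    (hB1 : BOrth x y) (hB2 : BOrth y z) (hB3 : BOrth z x)
    (θ σ : ℝ) (hθ : θ ≠ 0) (hσ : σ ≠ 0) (hzrep : z = θ • x + σ • y) :
    |θ| = 1 ∧ |σ| = 1 :=
  birkhoff_cycle_coeffs_general x y z hx hy hz hB1 hB2 hB3 θ σ hzrep
end

section
/- Let (V,‖·‖) be a normed plane whose unit circle is an affine regular 2n-gon with n ≥ 3 odd, and let x, y be two consecutive vertices. Then ‖x − y‖ = √(2 − 2cos(π/n)). Conversely, if n ≥ 3 is even, this equality fails. -/
/-!
Consecutive vertices differ by `2 sin (π / 2n) • u`, where `u` is the Euclidean unit vector at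
angle `π / 2n - π / 2`, and `2 sin (π / 2n) = √(2 - 2 cos (π / n))`; so everything hinges on
whether `u` lies on the boundary of the polygon, whose vertices sit at the angles `π k / n`.
For odd `n` the angle of `u` is one of these, and `u` maximizes the functional `⟨·, u⟩` on the
polygon, hence is a boundary point. For even `n` the angle of `u` differs from each `π k / n` by
an odd multiple of `π / 2n`, so `⟨v, u⟩ ≤ cos (π / 2n) < 1 = ⟨u, u⟩` for every vertex `v`, and
`u` lies outside the polygon.
-/

open Module

variable {V : Type*} [NormedAddCommGroup V] [NormedSpace ℝ V]

noncomputable def vert (n k : ℕ) : ℝ × ℝ :=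
  (Real.cos (2 * Real.pi * k / (2 * n)), Real.sin (2 * Real.pi * k / (2 * n)))

open Real Set

theorem mem_frontier_of_isMaxOn {E : Type*} [NormedAddCommGroup E] [NormedSpace ℝ E]
    {f : E →L[ℝ] ℝ} (hf : f ≠ 0) {K : Set E} {u : E} (hu : u ∈ K) (hmax : IsMaxOn f K u) :
    u ∈ frontier K := by
  refine ⟨subset_closure hu, fun hint => hf ?_⟩
  exact (hmax.isLocalMax (mem_interior_iff_mem_nhds.1 hint)).hasFDerivAt_eq_zero f.hasFDerivAt

theorem norm_eq_one_iff_of_sphere_eq_image {α β : Type*} [Norm β] {f : α → β}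
    (hf : Function.Injective f) {K : Set α} (hK : {w : β | ‖w‖ = 1} = f '' K) (p : α) :
    ‖f p‖ = 1 ↔ p ∈ K := by
  rw [← hf.mem_set_image, ← hK]
  rfl

theorem sqrt_two_sub_two_cos_two_mul (a : ℝ) : √(2 - 2 * cos (2 * a)) = 2 * |sin a| := by
  rw [← mul_div_cancel_left₀ a two_ne_zero, abs_sin_half, mul_div_cancel_left₀ a two_ne_zero,
    show 2 - 2 * cos (2 * a) = 2 ^ 2 * ((1 - cos (2 * a)) / 2) by ring,
    sqrt_mul (by norm_num), sqrt_sq zero_le_two]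

theorem cos_pi_mul_div_le_cos_pi_div {N : ℕ} (hN : 0 < N) {r : ℝ} (h1 : 1 ≤ r) (hr : r ≤ N) :
    cos (π * r / N) ≤ cos (π / N) := by
  have hN' : (0 : ℝ) < N := Nat.cast_pos.2 hN
  apply cos_le_cos_of_nonneg_of_le_pi (by positivity)
  · rw [div_le_iff₀ hN']; nlinarith [pi_pos]
  · gcongr; nlinarith [pi_pos]

theorem cos_pi_div_lt_one {x : ℝ} (hx : 1 < x) : cos (π / x) < 1 := by
  simpa using cos_lt_cos_of_nonneg_of_le_pi le_rfl (div_le_self pi_pos.le (by linarith))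
    (by positivity : 0 < π / x)

theorem cos_pi_mul_div_le_of_odd {N : ℕ} (hN : 0 < N) {m : ℤ} (hm : Odd m) :
    cos (π * m / N) ≤ cos (π / N) := by
  have hN' : (0 : ℝ) < N := Nat.cast_pos.2 hN
  set r := m % (2 * N)
  have hdecomp : π * m / N = π * r / N + (m / (2 * N) : ℤ) * (2 * π) := by
    have hm : (m : ℝ) = 2 * N * (m / (2 * N) : ℤ) + r := by
      exact_mod_cast (Int.mul_ediv_add_emod m (2 * N)).symm
    rw [hm]; field_simp; ring
  have hr_odd : r % 2 = 1 := by
    rw [Int.emod_emod_of_dvd m (dvd_mul_right 2 (N : ℤ))]; exact Int.odd_iff.1 hm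
  have hr0 : 0 ≤ r := Int.emod_nonneg m (by omega)
  have hr2N : r < 2 * N := Int.emod_lt_of_pos m (by omega)
  rw [hdecomp, cos_add_int_mul_two_pi]
  rcases le_or_gt r N with hrN | hrN
  · exact cos_pi_mul_div_le_cos_pi_div hN (by exact_mod_cast (by omega : 1 ≤ r))
      (by exact_mod_cast hrN)
  · rw [← cos_two_pi_sub, show 2 * π - π * r / N = π * ((2 * N - r : ℤ) : ℝ) / N by
      push_cast; field_simp]
    exact cos_pi_mul_div_le_cos_pi_div hN (by exact_mod_cast (by omega : 1 ≤ 2 * N - r))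
      (by exact_mod_cast (by omega : 2 * N - r ≤ N))

noncomputable def unitVec (θ : ℝ) : ℝ × ℝ := (cos θ, sin θ)

theorem unitVec_add_two_pi (θ : ℝ) : unitVec (θ + 2 * π) = unitVec θ := by
  simp [unitVec]

theorem unitVec_zero_sub_unitVec_two_mul (a : ℝ) :
    unitVec 0 - unitVec (2 * a) = (2 * sin a) • unitVec (a - π / 2) := by
  simp only [unitVec, Prod.mk_sub_mk, Prod.smul_mk, smul_eq_mul, cos_zero, sin_zero,
    cos_sub_pi_div_two, sin_sub_pi_div_two, cos_two_mul, sin_two_mul, Prod.mk.injEq]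
  constructor <;> nlinarith [sin_sq_add_cos_sq a]

theorem vert_eq_unitVec (n k : ℕ) : vert n k = unitVec (π * k / n) := by
  rw [vert, unitVec, mul_assoc, mul_div_mul_left _ _ two_ne_zero]

noncomputable def componentAlong (θ : ℝ) : ℝ × ℝ →L[ℝ] ℝ :=
  cos θ • ContinuousLinearMap.fst ℝ ℝ ℝ + sin θ • ContinuousLinearMap.snd ℝ ℝ ℝ

theorem componentAlong_unitVec (θ α : ℝ) : componentAlong θ (unitVec α) = cos (α - θ) := by
  simp only [componentAlong, unitVec, add_apply, smul_apply, ContinuousLinearMap.coe_fst',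
    ContinuousLinearMap.coe_snd', smul_eq_mul, cos_sub]
  ring

theorem componentAlong_ne_zero (θ : ℝ) : componentAlong θ ≠ 0 := fun h => by
  simpa [h] using componentAlong_unitVec θ θ

def regularPolygon (n : ℕ) : Set (ℝ × ℝ) :=
  convexHull ℝ (range fun k : Fin (2 * n) => vert n k)

theorem isClosed_regularPolygon (n : ℕ) : IsClosed (regularPolygon n) :=
  ((finite_range _).isCompact_convexHull ℝ).isClosed

theorem exists_componentAlong_le_of_mem_regularPolygon {n : ℕ} (θ : ℝ) {p : ℝ × ℝ}
    (hp : p ∈ regularPolygon n) :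
    ∃ k : Fin (2 * n), componentAlong θ p ≤ cos (π * k / n - θ) := by
  obtain ⟨_, ⟨k, rfl⟩, hk⟩ := ((componentAlong θ : ℝ × ℝ →ₗ[ℝ] ℝ).convexOn convex_univ
    ).exists_ge_of_mem_convexHull (subset_univ _) hp
  exact ⟨k, by simpa [vert_eq_unitVec, componentAlong_unitVec] using hk⟩

theorem unitVec_mem_frontier_regularPolygon {n : ℕ} (hodd : Odd n) (hn : 1 < n) :
    unitVec (π / (2 * n) - π / 2) ∈ frontier (regularPolygon n) := by
  set θ := π / (2 * n) - π / 2 with hθ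
  obtain ⟨l, hl⟩ := hodd
  -- `θ + 2 * π = π * (3 * l + 2) / n`
  have hvert : unitVec θ = vert n (3 * l + 2) := by
    rw [vert_eq_unitVec, ← unitVec_add_two_pi]
    congr 1
    subst hl
    rw [hθ]
    push_cast
    field_simp
    ring
  have hmem : unitVec θ ∈ regularPolygon n :=
    hvert ▸ subset_convexHull ℝ _ ⟨⟨3 * l + 2, by omega⟩, rfl⟩
  refine mem_frontier_of_isMaxOn (componentAlong_ne_zero θ) hmem (isMaxOn_iff.2 fun p hp => ?_)
  obtain ⟨k, hk⟩ := exists_componentAlong_le_of_mem_regularPolygon θ hp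
  rw [componentAlong_unitVec, sub_self, cos_zero]
  exact hk.trans (cos_le_one _)

theorem unitVec_notMem_regularPolygon {n : ℕ} (heven : Even n) :
    unitVec (π / (2 * n) - π / 2) ∉ regularPolygon n := by
  set θ := π / (2 * n) - π / 2 with hθ
  intro hmem
  obtain ⟨k, hk⟩ := exists_componentAlong_le_of_mem_regularPolygon θ hmem
  have hn : 0 < 2 * n := k.pos
  have hn' : (n : ℝ) ≠ 0 := by exact_mod_cast (by omega : n ≠ 0)
  have hangle : π * k / n - θ = π * ((2 * k + n - 1 : ℤ) : ℝ) / (2 * n) := by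
    rw [hθ]
    push_cast
    field_simp
    ring
  have hodd : Odd (2 * (k : ℤ) + n - 1) := by
    obtain ⟨j, hj⟩ := heven
    exact ⟨k + j - 1, by omega⟩
  have hlt : cos (π / (2 * n)) < 1 := cos_pi_div_lt_one (by norm_cast; omega)
  have hle := cos_pi_mul_div_le_of_odd hn hodd
  rw [componentAlong_unitVec, sub_self, cos_zero, hangle] at hk
  push_cast at hk hle
  linarith

theorem polygon_consecutive_vertices_dist_general
    (n : ℕ) (hn : 3 ≤ n) (e : (ℝ × ℝ) ≃ₗ[ℝ] V)
    (hS : {w : V | ‖w‖ = 1} =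
      ⇑e '' frontier (convexHull ℝ (Set.range fun k : Fin (2 * n) => vert n k))) :
    (Odd n → ‖e (vert n 0) - e (vert n 1)‖ = Real.sqrt (2 - 2 * Real.cos (Real.pi / n))) ∧
    (Even n → ‖e (vert n 0) - e (vert n 1)‖ ≠ Real.sqrt (2 - 2 * Real.cos (Real.pi / n))) := by
  set a := π / (2 * n) with ha
  have hsphere (p : ℝ × ℝ) : ‖e p‖ = 1 ↔ p ∈ frontier (regularPolygon n) :=
    norm_eq_one_iff_of_sphere_eq_image e.injective hS p
  have htwo : π / n = 2 * a := by rw [ha]; field_simp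
  have hdist : ‖e (vert n 0) - e (vert n 1)‖ =
      √(2 - 2 * cos (π / n)) * ‖e (unitVec (a - π / 2))‖ := by
    rw [← map_sub, vert_eq_unitVec, vert_eq_unitVec, Nat.cast_zero, mul_zero, zero_div,
      Nat.cast_one, mul_one, htwo, unitVec_zero_sub_unitVec_two_mul, map_smul, norm_smul,
      sqrt_two_sub_two_cos_two_mul, Real.norm_eq_abs, abs_mul, abs_two]
  refine ⟨fun hodd => ?_, fun heven h => ?_⟩
  · rw [hdist, (hsphere _).2 (unitVec_mem_frontier_regularPolygon hodd (by omega)), mul_one]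
  · have hpos : 0 < √(2 - 2 * cos (π / n)) :=
      sqrt_pos.2 (by linarith [cos_pi_div_lt_one (x := n) (by norm_cast; omega)])
    rw [hdist, mul_eq_left₀ hpos.ne', hsphere] at h
    exact unitVec_notMem_regularPolygon heven ((isClosed_regularPolygon n).frontier_subset h)

theorem polygon_consecutive_vertices_dist (hV : finrank ℝ V = 2)
    (n : ℕ) (hn : 3 ≤ n) (e : (ℝ × ℝ) ≃ₗ[ℝ] V)
    (hS : {w : V | ‖w‖ = 1} =
      ⇑e '' frontier (convexHull ℝ (Set.range fun k : Fin (2 * n) => vert n k))) :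
    (Odd n → ‖e (vert n 0) - e (vert n 1)‖ = Real.sqrt (2 - 2 * Real.cos (Real.pi / n))) ∧
    (Even n → ‖e (vert n 0) - e (vert n 1)‖ ≠ Real.sqrt (2 - 2 * Real.cos (Real.pi / n))) :=
  polygon_consecutive_vertices_dist_general n hn e hS
end

section
/- Let (V,‖·‖) be a normed plane whose unit circle is an affine regular 2n-gon with n ≥ 3 even, and let x, y be consecutive vertices. Then s(x,y) = sin(π/n), where s(x,y) = inf_{t∈ℝ} ‖x + t y‖. -/
/-!
Write `α = π / n`, `x = (1, 0)` and `y = (cos α, sin α)`. Because `n` is even, the Euclidean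
unit vector `u = (sin α, -cos α)` orthogonal to `y` is itself a vertex. As the polygon is inscribed
in the Euclidean unit circle, the functional `⟪·, u⟫` is at most `1` on it with equality at `u`;
hence `u` lies on the boundary (so `‖u‖ = 1`) and `⟪·, u⟫` is a lower bound for the norm. This
functional equals `sin α` on the whole line `x + ℝ y`, and the point `x - cos α • y = sin α • u`
of that line has norm exactly `sin α`.
-/

open Module

variable {V : Type*} [NormedAddCommGroup V] [NormedSpace ℝ V]

open Real Set Filter Topology

theorem sine_eq_of_forall_le_of_eq {x y : V} {c : ℝ} (hle : ∀ t : ℝ, c ≤ ‖x + t • y‖)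
    (t₀ : ℝ) (heq : ‖x + t₀ • y‖ = c) : sine x y = c :=
  ciInf_eq_of_forall_ge_of_forall_gt_exists_lt hle fun _ hw ↦ ⟨t₀, heq ▸ hw⟩

theorem mem_frontier_of_forall_le_of_apply_eq {E : Type*} [AddCommGroup E] [Module ℝ E]
    [TopologicalSpace E] [ContinuousSMul ℝ E] {P : Set E} {f : E →ₗ[ℝ] ℝ} {u : E} (huP : u ∈ P)
    (hf : ∀ p ∈ P, f p ≤ 1) (hu : f u = 1) : u ∈ frontier P := by
  refine ⟨subset_closure huP, fun hint ↦ ?_⟩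
  have hnear : ∀ᶠ t in 𝓝[>] (1 : ℝ), t • u ∈ P := by
    have hcont : Tendsto (fun t : ℝ ↦ t • u) (𝓝 1) (𝓝 u) :=
      Continuous.tendsto' (by fun_prop) _ _ (one_smul _ _)
    exact (hcont.eventually (mem_interior_iff_mem_nhds.mp hint)).filter_mono nhdsWithin_le_nhds
  obtain ⟨t, htP, ht⟩ := (hnear.and self_mem_nhdsWithin).exists
  have := hf _ htP
  rw [map_smul, hu, smul_eq_mul, mul_one] at this
  exact absurd ht (not_lt.mpr this)

theorem apply_le_norm_of_sphere_subset_image {E : Type*} [AddCommGroup E] [Module ℝ E]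
    (e : E ≃ₗ[ℝ] V) {P : Set E} (hS : {w : V | ‖w‖ = 1} ⊆ e '' P) {f : E →ₗ[ℝ] ℝ}
    (hf : ∀ p ∈ P, f p ≤ 1) (q : E) : f q ≤ ‖e q‖ := by
  rcases eq_or_ne q 0 with rfl | hq
  · simp
  have hc : 0 < ‖e q‖ := norm_pos_iff.mpr (e.map_ne_zero_iff.mpr hq)
  obtain ⟨p, hpP, hpq⟩ := hS (show ‖‖e q‖⁻¹ • e q‖ = 1 by
    rw [norm_smul, norm_inv, norm_norm, inv_mul_cancel₀ hc.ne'])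
  have hq_eq : q = ‖e q‖ • p := e.injective (by rw [map_smul, hpq, smul_inv_smul₀ hc.ne'])
  calc f q = ‖e q‖ * f p := by rw [← smul_eq_mul, ← map_smul, ← hq_eq]
    _ ≤ ‖e q‖ := mul_le_of_le_one_right hc.le (hf p hpP)

def dotWith (u : ℝ × ℝ) : ℝ × ℝ →ₗ[ℝ] ℝ :=
  u.1 • LinearMap.fst ℝ ℝ ℝ + u.2 • LinearMap.snd ℝ ℝ ℝ

@[simp]
theorem dotWith_apply (u p : ℝ × ℝ) : dotWith u p = u.1 * p.1 + u.2 * p.2 := rfl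

theorem dotWith_le_one_of_mem_convexHull {S : Set (ℝ × ℝ)} (hS : ∀ p ∈ S, p.1 ^ 2 + p.2 ^ 2 = 1)
    {u : ℝ × ℝ} (hu : u.1 ^ 2 + u.2 ^ 2 = 1) : ∀ p ∈ convexHull ℝ S, dotWith u p ≤ 1 :=
  fun _ hp ↦ convexHull_min (fun p hpS ↦ by
      have := hS p hpS
      simp only [mem_ofPred_eq, dotWith_apply]
      nlinarith [sq_nonneg (u.1 - p.1), sq_nonneg (u.2 - p.2)])
    (convex_halfSpace_le (dotWith u).isLinear 1) hp

theorem vert_eq (n k : ℕ) : vert n k = (cos (k * (π / n)), sin (k * (π / n))) := by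
  have : 2 * π * k / (2 * n) = k * (π / n) := by
    rw [mul_assoc, mul_div_mul_left _ _ two_ne_zero]
    ring
  simp only [vert, this]

theorem vert_fst_sq_add_snd_sq (n k : ℕ) : (vert n k).1 ^ 2 + (vert n k).2 ^ 2 = 1 := by
  rw [vert_eq, add_comm]
  exact sin_sq_add_cos_sq _

theorem vert_zero (n : ℕ) : vert n 0 = (1, 0) := by simp [vert_eq]

theorem vert_one (n : ℕ) : vert n 1 = (cos (π / n), sin (π / n)) := by simp [vert_eq]

-- The vertex at angle `π / n - π / 2`; it exists because `n` is even.
theorem vert_three_mul_add_one {n m : ℕ} (hnm : n = 2 * m) (hm : m ≠ 0) :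
    vert n (3 * m + 1) = (sin (π / n), -cos (π / n)) := by
  have hangle : ((3 * m + 1 : ℕ) : ℝ) * (π / n) = π / n + π + π / 2 := by
    subst hnm
    push_cast
    field_simp
    ring
  rw [vert_eq, hangle, cos_add_pi_div_two, sin_add_pi_div_two, sin_add_pi, cos_add_pi, neg_neg]

theorem polygon_consecutive_vertices_sine_general
    (n : ℕ) (hn : 3 ≤ n) (heven : Even n) (e : (ℝ × ℝ) ≃ₗ[ℝ] V)
    (hS : {w : V | ‖w‖ = 1} =
      ⇑e '' frontier (convexHull ℝ (Set.range fun k : Fin (2 * n) => vert n k))) :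
    sine (e (vert n 0)) (e (vert n 1)) = Real.sin (Real.pi / n) := by
  obtain ⟨m, hnm⟩ := heven.two_dvd
  set P := convexHull ℝ (range fun k : Fin (2 * n) => vert n k)
  set u := vert n (3 * m + 1)
  have hu : u = (sin (π / n), -cos (π / n)) := vert_three_mul_add_one hnm (by omega)
  have hP : ∀ p ∈ P, dotWith u p ≤ 1 := dotWith_le_one_of_mem_convexHull
    (by rintro _ ⟨k, rfl⟩; exact vert_fst_sq_add_snd_sq n k) (vert_fst_sq_add_snd_sq n _)
  have hu_frontier : u ∈ frontier P :=
    mem_frontier_of_forall_le_of_apply_eq (subset_convexHull ℝ _ ⟨⟨3 * m + 1, by omega⟩, rfl⟩) hP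
      (by simpa [sq] using vert_fst_sq_add_snd_sq n (3 * m + 1))
  have hsphere : {w : V | ‖w‖ = 1} ⊆ e '' P :=
    hS ▸ image_mono ((Set.finite_range _).isCompact_convexHull (𝕜 := ℝ)).isClosed.frontier_subset
  have hsin : 0 ≤ sin (π / n) :=
    sin_nonneg_of_nonneg_of_le_pi (by positivity) (div_le_self pi_pos.le (by norm_cast; omega))
  refine sine_eq_of_forall_le_of_eq (fun t ↦ ?_) (-cos (π / n)) ?_
  · calc sin (π / n) = dotWith u (vert n 0 + t • vert n 1) := by
          simp only [hu, vert_zero, vert_one, dotWith_apply, Prod.fst_add, Prod.snd_add,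
            Prod.smul_fst, Prod.smul_snd, smul_eq_mul]
          ring
      _ ≤ ‖e (vert n 0) + t • e (vert n 1)‖ := by
          simpa only [map_add, map_smul] using
            apply_le_norm_of_sphere_subset_image e hsphere hP (vert n 0 + t • vert n 1)
  · have hcomb : vert n 0 + (-cos (π / n)) • vert n 1 = sin (π / n) • u := by
      rw [hu, vert_zero, vert_one]
      ext <;> simp only [Prod.fst_add, Prod.snd_add, Prod.smul_fst, Prod.smul_snd, smul_eq_mul] <;>
        nlinarith [sin_sq_add_cos_sq (π / n)]
    have heu : ‖e u‖ = 1 := (hS ▸ ⟨u, hu_frontier, rfl⟩ : e u ∈ {w : V | ‖w‖ = 1})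
    rw [← map_smul, ← map_add, hcomb, map_smul, norm_smul, heu, mul_one, norm_of_nonneg hsin]

theorem polygon_consecutive_vertices_sine (hV : finrank ℝ V = 2)
    (n : ℕ) (hn : 3 ≤ n) (heven : Even n) (e : (ℝ × ℝ) ≃ₗ[ℝ] V)
    (hS : {w : V | ‖w‖ = 1} =
      ⇑e '' frontier (convexHull ℝ (Set.range fun k : Fin (2 * n) => vert n k))) :
    sine (e (vert n 0)) (e (vert n 1)) = Real.sin (Real.pi / n) :=
  polygon_consecutive_vertices_sine_general n hn heven e hS
end

section
/- Let V be a symmetric normed plane with a pair of axes {e₁,e₂}. If x, y are unit vectors with x isosceles orthogonal to y (‖x+y‖ = ‖x−y‖), then s(x,y) = s(y,x). -/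
open Module

variable {V : Type*} [NormedAddCommGroup V] [NormedSpace ℝ V]

set_option maxHeartbeats 1000000 in
lemma core_unique {V : Type*} [NormedAddCommGroup V] [NormedSpace ℝ V]
    (x y : V) (hx : ‖x‖ = 1) (hy : ‖y‖ = 1)
    (a b : ℝ) (ha : 0 < a) (hb : 0 < b)
    (hz : ‖a • y + b • x‖ = 1)
    (hxy : ‖x + y‖ = ‖x - y‖) (hxz : ‖x + (a • y + b • x)‖ = ‖x - (a • y + b • x)‖) :
    False := by
  set c := ‖x + y‖ with hc
  set d := ‖x + (a • y + b • x)‖ with hd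
  have hcnn : (0:ℝ) ≤ c := norm_nonneg _
  have hdnn : (0:ℝ) ≤ d := norm_nonneg _
  have hs : (1:ℝ) ≤ a + b := by
    have h1 : ‖a • y + b • x‖ ≤ ‖a • y‖ + ‖b • x‖ := norm_add_le _ _
    rw [hz, norm_smul, norm_smul, hx, hy] at h1
    rw [Real.norm_eq_abs, Real.norm_eq_abs, abs_of_pos ha, abs_of_pos hb] at h1
    linarith
  have hspos : (0:ℝ) < a + b := by linarith
  have hbpos : (0:ℝ) < 1 + b := by linarith
  -- chain 1 : z' = (1/(a+b)) • z
  have I1 : x - (1/(a+b)) • (a • y + b • x) = (a/(a+b)) • (x - y) := by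
    match_scalars <;> field_simp <;> ring
  have N1 : ‖x - (1/(a+b)) • (a • y + b • x)‖ = (a/(a+b)) * c := by
    rw [I1, norm_smul, Real.norm_eq_abs, abs_of_pos (div_pos ha hspos), ← hxy]
  have I2 : y - (1/(a+b)) • (a • y + b • x) = (b/(a+b)) • (y - x) := by
    match_scalars <;> field_simp <;> ring
  have N2 : ‖y - (1/(a+b)) • (a • y + b • x)‖ = (b/(a+b)) * c := by
    rw [I2, norm_smul, Real.norm_eq_abs, abs_of_pos (div_pos hb hspos), norm_sub_rev, ← hxy]
  have I3 : (a • y + b • x) - (1/(a+b)) • (a • y + b • x) = (1 - 1/(a+b)) • (a • y + b • x) := by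
    match_scalars <;> field_simp <;> ring
  have h1s : 1/(a+b) ≤ 1 := by rw [div_le_one hspos]; linarith
  have N3 : ‖(a • y + b • x) - (1/(a+b)) • (a • y + b • x)‖ = 1 - 1/(a+b) := by
    rw [I3, norm_smul, hz, Real.norm_eq_abs, abs_of_nonneg (by linarith), mul_one]
  have N4 : ‖(1/(a+b)) • (a • y + b • x)‖ = 1/(a+b) := by
    rw [norm_smul, hz, Real.norm_eq_abs, abs_of_pos (by positivity), mul_one]
  have A1 : d ≤ (a/(a+b)) * c + (1 - 1/(a+b)) := by
    have e1 : x - (a • y + b • x)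
        = (x - (1/(a+b)) • (a • y + b • x)) - ((a • y + b • x) - (1/(a+b)) • (a • y + b • x)) := by
      module
    calc d = ‖x - (a • y + b • x)‖ := hxz
      _ ≤ ‖x - (1/(a+b)) • (a • y + b • x)‖ + ‖(a • y + b • x) - (1/(a+b)) • (a • y + b • x)‖ := by
          rw [e1]; exact norm_sub_le _ _
      _ = (a/(a+b)) * c + (1 - 1/(a+b)) := by rw [N1, N3]
  have A2 : 1 - 1/(a+b) ≤ (b/(a+b)) * c := by
    have e2 : ‖y‖ ≤ ‖y - (1/(a+b)) • (a • y + b • x)‖ + ‖(1/(a+b)) • (a • y + b • x)‖ := by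
      calc ‖y‖ = ‖(y - (1/(a+b)) • (a • y + b • x)) + (1/(a+b)) • (a • y + b • x)‖ := by
            rw [sub_add_cancel]
        _ ≤ _ := norm_add_le _ _
    rw [hy, N2, N4] at e2
    linarith
  have hcsum : (a/(a+b)) * c + (b/(a+b)) * c = c := by field_simp
  have Acd : d ≤ c := by linarith
  -- chain 2 : y' = (a/(1+b)) • y
  have hae : a ≤ 1 + b := by
    have e4 : ‖a • y‖ = ‖(a • y + b • x) - b • x‖ := by rw [add_sub_cancel_right]
    have e5 := norm_sub_le (a • y + b • x) (b • x)
    rw [← e4, norm_smul, norm_smul, hy, hx, hz, Real.norm_eq_abs, Real.norm_eq_abs,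
      abs_of_pos ha, abs_of_pos hb] at e5
    linarith
  have I5 : x + (a/(1+b)) • y = (1/(1+b)) • (x + (a • y + b • x)) := by
    match_scalars <;> field_simp <;> ring
  have N5 : ‖x + (a/(1+b)) • y‖ = (1/(1+b)) * d := by
    rw [I5, norm_smul, Real.norm_eq_abs, abs_of_pos (by positivity)]
  have I6 : (a • y + b • x) - (a/(1+b)) • y = (b/(1+b)) • (x + (a • y + b • x)) := by
    match_scalars <;> field_simp <;> ring
  have N6 : ‖(a • y + b • x) - (a/(1+b)) • y‖ = (b/(1+b)) * d := by
    rw [I6, norm_smul, Real.norm_eq_abs, abs_of_pos (div_pos hb hbpos)]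
  have I7 : y - (a/(1+b)) • y = (1 - a/(1+b)) • y := by module
  have N7 : ‖y - (a/(1+b)) • y‖ = 1 - a/(1+b) := by
    rw [I7, norm_smul, hy, Real.norm_eq_abs,
      abs_of_nonneg (by rw [sub_nonneg, div_le_one hbpos]; linarith), mul_one]
  have N8 : ‖(a/(1+b)) • y‖ = a/(1+b) := by
    rw [norm_smul, hy, Real.norm_eq_abs, abs_of_pos (div_pos ha hbpos), mul_one]
  have A3 : c ≤ (1/(1+b)) * d + (1 - a/(1+b)) := by
    have e5 : x + y = (x + (a/(1+b)) • y) + (y - (a/(1+b)) • y) := by module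
    calc c = ‖x + y‖ := rfl
      _ = ‖(x + (a/(1+b)) • y) + (y - (a/(1+b)) • y)‖ := by rw [← e5]
      _ ≤ _ := norm_add_le _ _
      _ = (1/(1+b)) * d + (1 - a/(1+b)) := by rw [N5, N7]
  have A4 : 1 - a/(1+b) ≤ (b/(1+b)) * d := by
    have e6 : ‖a • y + b • x‖ ≤ ‖(a • y + b • x) - (a/(1+b)) • y‖ + ‖(a/(1+b)) • y‖ := by
      calc ‖a • y + b • x‖ = ‖((a • y + b • x) - (a/(1+b)) • y) + (a/(1+b)) • y‖ := by
            rw [sub_add_cancel]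
        _ ≤ _ := norm_add_le _ _
    rw [hz, N6, N8] at e6
    linarith
  have hdsum : (1/(1+b)) * d + (b/(1+b)) * d = d := by field_simp
  have Adc : c ≤ d := by linarith
  have hcd : c = d := le_antisymm Adc Acd
  -- forced equalities
  have h1 : 1 - 1/(a+b) = (b/(a+b)) * c := by
    have hA1 := A1
    rw [← hcd] at hA1
    linarith
  have E1 : a + b - 1 = b * c := by
    have h2 := congrArg (fun r : ℝ => r * (a+b)) h1
    field_simp at h2
    linarith
  have h3 : 1 - a/(1+b) = (b/(1+b)) * d := by
    have hA3 := A3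
    rw [hcd] at hA3
    linarith
  have E2 : 1 + b - a = b * d := by
    have h4 := congrArg (fun r : ℝ => r * (1+b)) h3
    field_simp at h4
    linarith
  have ha1 : a = 1 := by
    rw [← hcd] at E2
    linarith
  subst ha1
  have hc1 : c = 1 := mul_left_cancel₀ (ne_of_gt hb) (by linarith : b * c = b * 1)
  have I9 : (x + ((1:ℝ) • y + b • x)) - (y - x) = (2+b) • x := by module
  have N9 : ‖(x + ((1:ℝ) • y + b • x)) - (y - x)‖ = 2 + b := by
    rw [I9, norm_smul, hx, Real.norm_eq_abs, abs_of_pos (by linarith), mul_one]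
  have N10 : ‖(x + ((1:ℝ) • y + b • x)) - (y - x)‖ ≤ d + c := by
    calc ‖(x + ((1:ℝ) • y + b • x)) - (y - x)‖ ≤ ‖x + ((1:ℝ) • y + b • x)‖ + ‖y - x‖ :=
          norm_sub_le _ _
      _ = d + c := by rw [norm_sub_rev, ← hxy]
  rw [N9] at N10
  rw [hcd] at hc1
  have hd1 : d = 1 := hc1
  rw [hcd, hd1] at N10
  linarith

lemma iso_unique {V : Type*} [NormedAddCommGroup V] [NormedSpace ℝ V]
    (x y z : V) (hx : ‖x‖ = 1) (hy : ‖y‖ = 1) (hz : ‖z‖ = 1)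
    (hxy : ‖x + y‖ = ‖x - y‖) (hxz : ‖x + z‖ = ‖x - z‖)
    (a b : ℝ) (hzab : z = a • y + b • x) : z = y ∨ z = -y := by
  rcases eq_or_ne b 0 with hb0 | hb0
  · subst hb0
    rw [zero_smul, add_zero] at hzab
    subst hzab
    rw [norm_smul, hy, mul_one, Real.norm_eq_abs] at hz
    rcases (abs_eq (by norm_num : (0:ℝ) ≤ 1)).mp hz with h | h
    · left; rw [h, one_smul]
    · right; rw [h, neg_one_smul]
  · exfalso
    subst hzab
    rcases eq_or_ne a 0 with ha0 | ha0
    · subst ha0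
      rw [zero_smul, zero_add] at hz hxz
      rw [show x + b • x = (1+b) • x by module, show x - b • x = (1-b) • x by module,
        norm_smul, norm_smul, hx, mul_one, mul_one, Real.norm_eq_abs, Real.norm_eq_abs] at hxz
      rcases abs_eq_abs.mp hxz with h | h
      · exact hb0 (by linarith)
      · linarith
    · rcases lt_or_gt_of_ne ha0 with ha | ha <;> rcases lt_or_gt_of_ne hb0 with hb | hb
      · exact core_unique x y hx hy (-a) (-b) (by linarith) (by linarith)
          (by rw [show (-a) • y + (-b) • x = -(a • y + b • x) by module, norm_neg]; exact hz)
          hxy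
          (by rw [show x + ((-a) • y + (-b) • x) = x - (a • y + b • x) by module,
                show x - ((-a) • y + (-b) • x) = x + (a • y + b • x) by module]
              exact hxz.symm)
      · exact core_unique x (-y) hx (by rw [norm_neg]; exact hy) (-a) b (by linarith) hb
          (by rw [show (-a) • (-y) + b • x = a • y + b • x by module]; exact hz)
          (by rw [show x + -y = x - y by module, show x - -y = x + y by module]; exact hxy.symm)
          (by rw [show x + ((-a) • (-y) + b • x) = x + (a • y + b • x) by module,
                show x - ((-a) • (-y) + b • x) = x - (a • y + b • x) by module]
              exact hxz)
      · exact core_unique x (-y) hx (by rw [norm_neg]; exact hy) a (-b) ha (by linarith)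
          (by rw [show a • (-y) + (-b) • x = -(a • y + b • x) by module, norm_neg]; exact hz)
          (by rw [show x + -y = x - y by module, show x - -y = x + y by module]; exact hxy.symm)
          (by rw [show x + (a • (-y) + (-b) • x) = x - (a • y + b • x) by module,
                show x - (a • (-y) + (-b) • x) = x + (a • y + b • x) by module]
              exact hxz.symm)
      · exact core_unique x y hx hy a b ha hb hz hxy hxz

lemma negInf (f : ℝ → ℝ) (hf : ∀ t, 0 ≤ f t) : (⨅ t : ℝ, f (-t)) = ⨅ t : ℝ, f t := by
  have hb1 : BddBelow (Set.range fun t : ℝ => f (-t)) := ⟨0, by rintro r ⟨t, rfl⟩; exact hf _⟩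
  have hb2 : BddBelow (Set.range f) := ⟨0, by rintro r ⟨t, rfl⟩; exact hf _⟩
  apply le_antisymm
  · exact le_ciInf fun t => by simpa using ciInf_le hb1 (-t)
  · exact le_ciInf fun t => ciInf_le hb2 (-t)

set_option maxHeartbeats 1000000 in
theorem symmetric_plane_isosceles_sine_symm (hV : finrank ℝ V = 2)
    (e₁ e₂ : V) (hind : LinearIndependent ℝ ![e₁, e₂]) (he₁ : ‖e₁‖ = 1) (he₂ : ‖e₂‖ = 1)
    (hsym : ∀ l : ℝ, ‖e₁ + l • e₂‖ = ‖e₁ - l • e₂‖ ∧ ‖e₁ - l • e₂‖ = ‖e₂ + l • e₁‖ ∧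
      ‖e₂ + l • e₁‖ = ‖e₂ - l • e₁‖)
    (x y : V) (hx : ‖x‖ = 1) (hy : ‖y‖ = 1) (hI : ‖x + y‖ = ‖x - y‖) :
    sine x y = sine y x := by
  classical
  have hcard : Fintype.card (Fin 2) = finrank ℝ V := by simp [hV]
  let B := basisOfLinearIndependentOfCardEqFinrank hind hcard
  have hB : ⇑B = ![e₁, e₂] := coe_basisOfLinearIndependentOfCardEqFinrank hind hcard
  have hrepr : ∀ v : V, v = B.repr v 0 • e₁ + B.repr v 1 • e₂ := by
    intro v
    have h := B.sum_repr v
    rw [Fin.sum_univ_two] at h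
    have h0 : B 0 = e₁ := by rw [show (B : Fin 2 → V) 0 = ![e₁, e₂] 0 from congrFun hB 0]; rfl
    have h1 : B 1 = e₂ := by rw [show (B : Fin 2 → V) 1 = ![e₁, e₂] 1 from congrFun hB 1]; rfl
    rw [h0, h1] at h
    exact h.symm
  -- symmetry of the norm in coordinates
  have Nfl : ∀ a b : ℝ, ‖a • e₁ + b • e₂‖ = ‖a • e₁ - b • e₂‖ := by
    intro a b
    rcases eq_or_ne a 0 with h | h
    · subst h; simp only [zero_smul, zero_add, zero_sub, norm_neg]
    · have e1 : a • e₁ + b • e₂ = a • (e₁ + (b/a) • e₂) := by match_scalars <;> field_simp <;> ring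
      have e2 : a • e₁ - b • e₂ = a • (e₁ - (b/a) • e₂) := by match_scalars <;> field_simp <;> ring
      rw [e1, e2, norm_smul, norm_smul, (hsym (b/a)).1]
  have Nsw : ∀ a b : ℝ, ‖a • e₁ + b • e₂‖ = ‖b • e₁ + a • e₂‖ := by
    intro a b
    rcases eq_or_ne a 0 with h | h
    · subst h; simp [norm_smul, he₁, he₂]
    · have e1 : a • e₁ + b • e₂ = a • (e₁ + (b/a) • e₂) := by match_scalars <;> field_simp <;> ring
      have e2 : b • e₁ + a • e₂ = a • (e₂ + (b/a) • e₁) := by match_scalars <;> field_simp <;> ring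
      rw [e1, e2, norm_smul, norm_smul, (hsym (b/a)).1, (hsym (b/a)).2.1]
  have Nfst : ∀ a b : ℝ, ‖a • e₁ + b • e₂‖ = ‖(-a) • e₁ + b • e₂‖ := by
    intro a b
    rw [Nfl a b, show (-a) • e₁ + b • e₂ = -(a • e₁ - b • e₂) by module, norm_neg]
  -- coordinates of x and y
  set α := B.repr x 0 with hα
  set β := B.repr x 1 with hβ
  have hxr : x = α • e₁ + β • e₂ := hrepr x
  set γ := B.repr y 0 with hγ
  set δ := B.repr y 1 with hδ
  have hyr : y = γ • e₁ + δ • e₂ := hrepr y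
  have hαβ : α^2 + β^2 ≠ 0 := by
    intro h
    have h1 : α^2 = 0 := by nlinarith [sq_nonneg α, sq_nonneg β]
    have h2 : β^2 = 0 := by nlinarith [sq_nonneg α, sq_nonneg β]
    have hA : α = 0 := by
      exact pow_eq_zero_iff (by norm_num) |>.mp h1
    have hBb : β = 0 := by
      exact pow_eq_zero_iff (by norm_num) |>.mp h2
    rw [hA, hBb, zero_smul, zero_smul, add_zero] at hxr
    rw [hxr, norm_zero] at hx
    exact absurd hx (by norm_num)
  -- the canonical orthogonal vector
  set y₀ := β • e₁ + (-α) • e₂ with hy₀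
  have hy₀n : ‖y₀‖ = 1 := by
    calc ‖y₀‖ = ‖(-α) • e₁ + β • e₂‖ := Nsw β (-α)
      _ = ‖α • e₁ + β • e₂‖ := (Nfst α β).symm
      _ = 1 := by rw [← hxr]; exact hx
  have hIy₀ : ‖x + y₀‖ = ‖x - y₀‖ := by
    have e1 : x + y₀ = (α+β) • e₁ + (β-α) • e₂ := by rw [hxr, hy₀]; module
    have e2 : x - y₀ = (α-β) • e₁ + (β+α) • e₂ := by rw [hxr, hy₀]; module
    calc ‖x + y₀‖ = ‖(α+β) • e₁ + (β-α) • e₂‖ := by rw [e1]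
      _ = ‖(β-α) • e₁ + (α+β) • e₂‖ := Nsw _ _
      _ = ‖(-(β-α)) • e₁ + (α+β) • e₂‖ := Nfst _ _
      _ = ‖(α-β) • e₁ + (β+α) • e₂‖ := by rw [neg_sub, add_comm α β]
      _ = ‖x - y₀‖ := by rw [e2]
  -- expand y in the basis (x, y₀)
  have hyab : y = ((β*γ - α*δ)/(α^2+β^2)) • y₀ + ((α*γ + β*δ)/(α^2+β^2)) • x := by
    rw [hyr, hy₀, hxr]
    match_scalars
    · field_simp; ring
    · field_simp; ring
  have hcase := iso_unique x y₀ y hx hy₀n hy hIy₀ hI _ _ hyab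
  -- sine symmetry for the pair (x, y₀)
  have hpt : ∀ t : ℝ, ‖y₀ + t • x‖ = ‖x + (-t) • y₀‖ := by
    intro t
    have e1 : y₀ + t • x = (β + t*α) • e₁ + (t*β - α) • e₂ := by rw [hy₀, hxr]; module
    have e2 : x + (-t) • y₀ = (α - t*β) • e₁ + (β + t*α) • e₂ := by rw [hy₀, hxr]; module
    rw [e1, e2, Nsw, show (α - t*β) = -(t*β - α) by ring]
    exact Nfst _ _
  have hsineswap : sine x y₀ = sine y₀ x := by
    have h : (⨅ t : ℝ, ‖y₀ + t • x‖) = ⨅ t : ℝ, ‖x + t • y₀‖ := by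
      calc (⨅ t : ℝ, ‖y₀ + t • x‖) = ⨅ t : ℝ, ‖x + (-t) • y₀‖ := iInf_congr fun t => hpt t
        _ = ⨅ t : ℝ, ‖x + t • y₀‖ := negInf (fun t => ‖x + t • y₀‖) (fun t => norm_nonneg _)
    exact h.symm
  rcases hcase with h | h
  · rw [h]; exact hsineswap
  · rw [h]
    have h1 : sine x (-y₀) = sine x y₀ := by
      show (⨅ t : ℝ, ‖x + t • (-y₀)‖) = ⨅ t : ℝ, ‖x + t • y₀‖
      calc (⨅ t : ℝ, ‖x + t • (-y₀)‖) = ⨅ t : ℝ, ‖x + (-t) • y₀‖ :=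
            iInf_congr fun t => by rw [smul_neg, neg_smul]
        _ = _ := negInf (fun t => ‖x + t • y₀‖) (fun t => norm_nonneg _)
    have h2 : sine (-y₀) x = sine y₀ x := by
      show (⨅ t : ℝ, ‖-y₀ + t • x‖) = ⨅ t : ℝ, ‖y₀ + t • x‖
      calc (⨅ t : ℝ, ‖-y₀ + t • x‖) = ⨅ t : ℝ, ‖y₀ + (-t) • x‖ :=
            iInf_congr fun t => by rw [show -y₀ + t • x = -(y₀ + (-t) • x) by module, norm_neg]
        _ = _ := negInf (fun t => ‖y₀ + t • x‖) (fun t => norm_nonneg _)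
    rw [h1, h2, hsineswap]
end
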